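/- Let A = [a_ij] be an m×m real matrix with nonnegative off-diagonal entries, and let γ ∈ ℝ^m satisfy γ_i > 0 and (Aγ)_i < 0 for every i. Let v : [0,∞) → ℝ^m be differentiable with v'(t) ≤ A v(t) componentwise for all t ≥ 0, with 0 ≤ v_i(0) ≤ γ_i for every i. Then v(t) ≤ γ componentwise for all t ≥ 0. -/

import Mathlib

/-!
The set of times `t` with `v t ≤ γ` is closed, contains `0`, and is open to the right: at a time
where `v ≤ γ` with equality in component `i`, the Metzler property gives
`v'ᵢ ≤ (A v)ᵢ ≤ (A γ)ᵢ < 0`, so `vᵢ` strictly decreases just afterwards, while the components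
with `vᵢ < γᵢ` stay below `γᵢ` by continuity. Real induction then propagates `v ≤ γ` forward.
-/

open Filter Topology Set

namespace Matrix

variable {n R : Type*} [Fintype n]

def IsMetzler [Zero R] [LE R] (A : Matrix n n R) : Prop :=
  ∀ i j, i ≠ j → 0 ≤ A i j

theorem IsMetzler.mulVec_apply_le [Semiring R] [PartialOrder R] [IsOrderedRing R]
    {A : Matrix n n R} (hA : A.IsMetzler) {u w : n → R} (huw : u ≤ w) {i : n} (hi : u i = w i) :
    (A *ᵥ u) i ≤ (A *ᵥ w) i := by
  refine Finset.sum_le_sum fun j _ => ?_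
  rcases eq_or_ne i j with rfl | hij
  · rw [hi]
  · exact mul_le_mul_of_nonneg_left (huw j) (hA i j hij)

end Matrix

theorem HasDerivWithinAt.eventually_nhdsGT_lt_of_neg {f : ℝ → ℝ} {f' x : ℝ}
    (hf : HasDerivWithinAt f f' (Ioi x) x) (hf' : f' < 0) : ∀ᶠ y in 𝓝[>] x, f y < f x := by
  rw [hasDerivWithinAt_iff_tendsto_slope' self_notMem_Ioi] at hf
  filter_upwards [hf.eventually (gt_mem_nhds hf'), self_mem_nhdsWithin] with y hslope hy
  exact (slope_neg_iff_of_le hy.le).1 hslope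

namespace Matrix.IsMetzler

variable {ι : Type*} [Fintype ι] {A : Matrix ι ι ℝ} {γ : ι → ℝ} {v v' : ℝ → ι → ℝ}

theorem eventually_nhdsGT_le_of_deriv_right_le_mulVec (hA : A.IsMetzler)
    (hAγ : ∀ i, (A *ᵥ γ) i < 0) {x : ℝ} (hv : HasDerivWithinAt v (v' x) (Ici x) x)
    (hcomp : v' x ≤ A *ᵥ v x) (hx : v x ≤ γ) : ∀ᶠ y in 𝓝[>] x, v y ≤ γ := by
  simp only [Pi.le_def, eventually_all]
  intro i
  have hvi : HasDerivWithinAt (fun t => v t i) (v' x i) (Ioi x) x :=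
    (hasDerivWithinAt_pi.1 hv i).mono Ioi_subset_Ici_self
  rcases (hx i).lt_or_eq with hlt | heq
  · exact (hvi.continuousWithinAt.eventually_lt continuousWithinAt_const hlt).mono
      fun _ => le_of_lt
  · have hderiv : v' x i < 0 := calc
      v' x i ≤ (A *ᵥ v x) i := hcomp i
      _ ≤ (A *ᵥ γ) i := hA.mulVec_apply_le hx heq
      _ < 0 := hAγ i
    exact (hvi.eventually_nhdsGT_lt_of_neg hderiv).mono fun _ hy => heq ▸ hy.le

theorem le_of_deriv_right_le_mulVec (hA : A.IsMetzler) (hAγ : ∀ i, (A *ᵥ γ) i < 0) {a b : ℝ}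
    (hv : ContinuousOn v (Icc a b)) (hv' : ∀ t ∈ Ico a b, HasDerivWithinAt v (v' t) (Ici t) t)
    (hcomp : ∀ t ∈ Ico a b, v' t ≤ A *ᵥ v t) (ha : v a ≤ γ) : ∀ ⦃t⦄, t ∈ Icc a b → v t ≤ γ := by
  refine IsClosed.Icc_subset_of_forall_mem_nhdsWithin (s := v ⁻¹' Iic γ) ?_ ha ?_
  · rw [inter_comm]
    exact hv.preimage_isClosed_of_isClosed isClosed_Icc isClosed_Iic
  · rintro t ⟨hγt, ht⟩
    exact hA.eventually_nhdsGT_le_of_deriv_right_le_mulVec hAγ (hv' t ht) (hcomp t ht) hγt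

end Matrix.IsMetzler

theorem invariance_criterion_general {m : ℕ} (A : Matrix (Fin m) (Fin m) ℝ)
    (hA : ∀ i j, i ≠ j → 0 ≤ A i j)
    (γ : Fin m → ℝ) (hAγ : ∀ i, A.mulVec γ i < 0)
    (v v' : ℝ → Fin m → ℝ)
    (hv : ∀ t ≥ (0 : ℝ), HasDerivAt v (v' t) t)
    (hcomp : ∀ t ≥ (0 : ℝ), ∀ i, v' t i ≤ A.mulVec (v t) i)
    (h0 : ∀ i, 0 ≤ v 0 i ∧ v 0 i ≤ γ i) :
    ∀ t ≥ (0 : ℝ), ∀ i, v t i ≤ γ i := fun _ ht =>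
  (show A.IsMetzler from hA).le_of_deriv_right_le_mulVec hAγ
    (fun s hs => (hv s hs.1).continuousAt.continuousWithinAt)
    (fun s hs => (hv s hs.1).hasDerivWithinAt) (fun s hs => hcomp s hs.1)
    (fun i => (h0 i).2) ⟨ht, le_rfl⟩

/-- Invariance criterion (25) of the paper: if `A` is Metzler and `γ > 0`
satisfies `A γ < 0` componentwise, then any differentiable `v` satisfying the
comparison inequality `v' t ≤ A (v t)` componentwise with `0 ≤ v 0 ≤ γ`
remains below `γ` for all `t ≥ 0`. -/
theorem invariance_criterion {m : ℕ} (A : Matrix (Fin m) (Fin m) ℝ)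
    (hA : ∀ i j, i ≠ j → 0 ≤ A i j)
    (γ : Fin m → ℝ) (hγ : ∀ i, 0 < γ i) (hAγ : ∀ i, A.mulVec γ i < 0)
    (v v' : ℝ → Fin m → ℝ)
    (hv : ∀ t ≥ (0 : ℝ), HasDerivAt v (v' t) t)
    (hcomp : ∀ t ≥ (0 : ℝ), ∀ i, v' t i ≤ A.mulVec (v t) i)
    (h0 : ∀ i, 0 ≤ v 0 i ∧ v 0 i ≤ γ i) :
    ∀ t ≥ (0 : ℝ), ∀ i, v t i ≤ γ i :=
  invariance_criterion_general A hA γ hAγ v v' hv hcomp h0
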